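/- For every state q of a B-bounded resource-aware Büchi word automaton, ext q = sInf { val z | z is an accepting run from q } (infimum in (ℕ∞, ≤), with sInf ∅ = ∞): the extent of q is the minimum, over all accepting runs from q, of the minimal initial resources required to execute the run. -/

import Mathlib

/-- Capped subtraction on `ℕ∞`: `n ⊖ m = ∞` if both `n = ∞` and `m = ∞`, and
`n ⊖ m = n - m` (truncated subtraction) otherwise. -/
def csub (n m : ℕ∞) : ℕ∞ := if n = ⊤ ∧ m = ⊤ then ⊤ else n - m

/-- Capped addition on `ℕ∞`: `m +_B n = m + n` if `m + n ≤ B`, and `∞` otherwise. -/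
def baddB (B : ℕ) (m n : ℕ∞) : ℕ∞ := if m + n ≤ (B : ℕ∞) then m + n else ⊤

/-- The operator whose `≤`-least fixpoint (in the pointwise order) is the value
function `val` (B-bounded version):
`Φ v z = (γ (z 0) (z 1) +_B v (fun n => z (n+1))) ⊖ r (z 0)`. -/
def PhiB {Q : Type*} (B : ℕ) (γ : Q → Q → ℕ∞) (r : Q → ℕ∞) (v : (ℕ → Q) → ℕ∞) :
    (ℕ → Q) → ℕ∞ :=
  fun z => csub (baddB B (γ (z 0) (z 1)) (v (fun n => z (n + 1)))) (r (z 0))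

/-- A run from `q₀`: a sequence of states starting at `q₀` all of whose steps are
actual transitions (finite weight). -/
def IsRun {Q : Type*} (γ : Q → Q → ℕ∞) (q₀ : Q) (z : ℕ → Q) : Prop :=
  z 0 = q₀ ∧ ∀ n, γ (z n) (z (n + 1)) ≠ ⊤

/-- A run is accepting iff it visits parity-2 (accepting) states infinitely often. -/
def Accepting {Q : Type*} (Ω : Q → ℕ) (z : ℕ → Q) : Prop :=
  ∀ N, ∃ n, N ≤ n ∧ Ω (z n) = 2

/-- One step of the extent system (B-bounded version):
`q ↦ (⨅ q', (γ q q' +_B u q')) ⊖ r q`. -/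
noncomputable def extStepB {Q : Type*} (B : ℕ) (γ : Q → Q → ℕ∞) (r : Q → ℕ∞)
    (u : Q → ℕ∞) (q : Q) : ℕ∞ :=
  csub (⨅ q' : Q, baddB B (γ q q') (u q')) (r q)

/-- The copairing `[u₁, u₂] : Q → ℕ∞` of `u₁ : Q₁ → ℕ∞` and `u₂ : Q₂ → ℕ∞`. -/
def copair {Q : Type*} (Ω : Q → ℕ) (hΩ : ∀ q, Ω q = 1 ∨ Ω q = 2)
    (u₁ : {q // Ω q = 1} → ℕ∞) (u₂ : {q // Ω q = 2} → ℕ∞) (q : Q) : ℕ∞ :=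
  if h : Ω q = 2 then u₂ ⟨q, h⟩ else u₁ ⟨q, (hΩ q).resolve_right h⟩

/-!
`≤`: unrolling `val = Φ val` along an accepting run up to its next visit of `Q₂` shows that the
copairing `[inner W₂, W₂]` is below the optimal value `W` of accepting runs, where `W₂` is the
restriction of `W` to `Q₂`. One more unrolling step makes `W₂` a pre-fixpoint of the outer
operator, so `e₂ ≤ W₂`, and `ext ≤ W` follows since `inner` is monotone, being a greatest fixpoint.

`≥`: as `<` is well-founded on `Q₁ → ℕ∞`, `inner e₂` is reached after finitely many, say `K`,
iterations `g₀ = ⊤, g₁, …` of the inner operator. Following minimising successors for the levels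
`[g_k, e₂]`, dropping one level at each state of `Q₁` and returning to level `K` at each state of
`Q₂`, gives a run that cannot stay in `Q₁` for longer than its current level, since `g₀ = ⊤`. The
levels along this run form a chain of upper bounds that is a pre-fixpoint of `Φ`, hence bound
`val` of the run by `ext q`.
-/

open OrderHom

section CappedArithmetic

lemma csub_top_left (m : ℕ∞) : csub ⊤ m = ⊤ := by
  unfold csub
  split_ifs with h
  · rfl
  · lift m to ℕ using fun hm => h ⟨rfl, hm⟩
    exact ENat.top_sub_natCast m

lemma csub_mono_left {n n' : ℕ∞} (m : ℕ∞) (h : n ≤ n') : csub n m ≤ csub n' m := by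
  by_cases hn' : n' = ⊤
  · rw [hn', csub_top_left]
    exact le_top
  · have hn : n ≠ ⊤ := ne_top_of_le_ne_top hn' h
    unfold csub
    rw [if_neg (by simp [hn]), if_neg (by simp [hn'])]
    exact tsub_le_tsub_right h m

lemma ne_top_of_csub_ne_top {n m : ℕ∞} (h : csub n m ≠ ⊤) : n ≠ ⊤ := by
  rintro rfl
  exact h (csub_top_left m)

lemma baddB_mono_right (B : ℕ) (m : ℕ∞) : Monotone (baddB B m) := by
  intro n n' h
  unfold baddB
  have hmn : m + n ≤ m + n' := by gcongr
  by_cases h' : m + n' ≤ B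
  · rw [if_pos h', if_pos (hmn.trans h')]
    exact hmn
  · rw [if_neg h']
    exact le_top

lemma ne_top_of_baddB_ne_top {B : ℕ} {m n : ℕ∞} (h : baddB B m n ≠ ⊤) : m ≠ ⊤ ∧ n ≠ ⊤ := by
  unfold baddB at h
  split_ifs at h with hB
  · exact WithTop.add_ne_top.mp (ne_top_of_le_ne_top (ENat.natCast_ne_top B) hB)
  · exact absurd rfl h

end CappedArithmetic

section Step

variable {Q : Type*} (B : ℕ) (γ : Q → Q → ℕ∞) (r : Q → ℕ∞)

lemma extStepB_mono : Monotone (extStepB B γ r) :=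
  fun _ _ h _ => csub_mono_left _ (iInf_mono fun q' => baddB_mono_right B _ (h q'))

lemma extStepB_le (u : Q → ℕ∞) (q q' : Q) :
    extStepB B γ r u q ≤ csub (baddB B (γ q q') (u q')) (r q) :=
  csub_mono_left _ (iInf_le _ q')

lemma exists_extStepB_eq [Finite Q] (u : Q → ℕ∞) (q : Q) :
    ∃ q', extStepB B γ r u q = csub (baddB B (γ q q') (u q')) (r q) := by
  have : Nonempty Q := ⟨q⟩
  obtain ⟨q', hq'⟩ := exists_eq_ciInf_of_finite (f := fun q' => baddB B (γ q q') (u q'))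
  exact ⟨q', by rw [extStepB, ← hq']⟩

def valStep : ((ℕ → Q) → ℕ∞) →o ((ℕ → Q) → ℕ∞) where
  toFun := PhiB B γ r
  monotone' _ _ h _ := csub_mono_left _ (baddB_mono_right B _ (h _))

end Step

section Copair

variable {Q : Type*} (Ω : Q → ℕ) (hΩ : ∀ q, Ω q = 1 ∨ Ω q = 2)
  {u₁ u₁' : {q // Ω q = 1} → ℕ∞} {u₂ u₂' : {q // Ω q = 2} → ℕ∞} {q : Q}

lemma copair_of_eq_two (h : Ω q = 2) : copair Ω hΩ u₁ u₂ q = u₂ ⟨q, h⟩ := dif_pos h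

lemma copair_of_ne_two (h : Ω q ≠ 2) :
    copair Ω hΩ u₁ u₂ q = u₁ ⟨q, (hΩ q).resolve_right h⟩ := dif_neg h

lemma copair_mono (h₁ : u₁ ≤ u₁') (h₂ : u₂ ≤ u₂') : copair Ω hΩ u₁ u₂ ≤ copair Ω hΩ u₁' u₂' := by
  intro q
  unfold copair
  split
  · exact h₂ _
  · exact h₁ _

end Copair

lemma OrderHom.exists_iterate_top_eq_gfp {α : Type*} [CompleteLattice α] [WellFoundedLT α]
    (f : α →o α) : ∃ K, f^[K] ⊤ = f.gfp := by
  obtain ⟨K, hK⟩ :=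
    WellFoundedLT.antitone_chain_condition (f.monotone.antitone_iterate_of_map_le le_top)
  have gfp_le_iterate : ∀ n, f.gfp ≤ f^[n] ⊤ := by
    intro n
    induction n with
    | zero => exact le_top
    | succ n ih =>
      rw [Function.iterate_succ_apply']
      exact f.gfp_le_map ih
  refine ⟨K, le_antisymm (f.le_gfp ?_) (gfp_le_iterate K)⟩
  rw [← Function.iterate_succ_apply' f, ← hK (K + 1) K.le_succ]

section Runs

variable {Q : Type*} {γ : Q → Q → ℕ∞} {Ω : Q → ℕ} {z : ℕ → Q}

lemma IsRun.shift {q : Q} (h : IsRun γ q z) : IsRun γ (z 1) (fun n => z (n + 1)) :=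
  ⟨rfl, fun n => h.2 (n + 1)⟩

lemma Accepting.shift (h : Accepting Ω z) : Accepting Ω (fun n => z (n + 1)) := by
  intro N
  obtain ⟨n, hn, h2⟩ := h (N + 1)
  exact ⟨n - 1, by omega, by simpa [Nat.sub_add_cancel (by omega : 1 ≤ n)] using h2⟩

lemma accepting_of_rank_lt (rank : ℕ → ℕ) (h : ∀ n, Ω (z n) ≠ 2 → rank (n + 1) < rank n) :
    Accepting Ω z := by
  suffices ∀ k N, rank N = k → ∃ n, N ≤ n ∧ Ω (z n) = 2 from fun N => this _ N rfl
  intro k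
  induction k using Nat.strong_induction_on with
  | _ k ih =>
    intro N hN
    by_cases h2 : Ω (z N) = 2
    · exact ⟨N, le_rfl, h2⟩
    · obtain ⟨n, hn, hn2⟩ := ih _ (hN ▸ h N h2) (N + 1) rfl
      exact ⟨n, by omega, hn2⟩

end Runs

noncomputable def minAcceptingVal {Q : Type*} (γ : Q → Q → ℕ∞) (Ω : Q → ℕ)
    (val : (ℕ → Q) → ℕ∞) (q : Q) : ℕ∞ :=
  sInf {v : ℕ∞ | ∃ z : ℕ → Q, IsRun γ q z ∧ Accepting Ω z ∧ val z = v}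

section Value

variable {Q : Type*} {B : ℕ} {γ : Q → Q → ℕ∞} {r : Q → ℕ∞} {Ω : Q → ℕ}
  {val : (ℕ → Q) → ℕ∞}

lemma extStepB_le_val (hval : PhiB B γ r val = val) {u : Q → ℕ∞} {z : ℕ → Q}
    (h : u (z 1) ≤ val (fun n => z (n + 1))) : extStepB B γ r u (z 0) ≤ val z :=
  calc extStepB B γ r u (z 0)
      ≤ csub (baddB B (γ (z 0) (z 1)) (u (z 1))) (r (z 0)) := extStepB_le B γ r u _ _
    _ ≤ PhiB B γ r val z := csub_mono_left _ (baddB_mono_right B _ h)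
    _ = val z := congrFun hval z

lemma le_minAcceptingVal (hval : PhiB B γ r val = val) {u : Q → ℕ∞}
    (h₁ : ∀ q, Ω q ≠ 2 → u q ≤ extStepB B γ r u q)
    (h₂ : ∀ q, Ω q = 2 → u q ≤ minAcceptingVal γ Ω val q) :
    u ≤ minAcceptingVal γ Ω val := by
  have base : ∀ z, IsRun γ (z 0) z → Accepting Ω z → Ω (z 0) = 2 → u (z 0) ≤ val z :=
    fun z hz hacc h2 => (h₂ _ h2).trans (sInf_le ⟨z, hz, hacc, rfl⟩)
  suffices key : ∀ n z, IsRun γ (z 0) z → Accepting Ω z → Ω (z n) = 2 → u (z 0) ≤ val z by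
    intro q
    refine le_sInf ?_
    rintro _ ⟨z, ⟨rfl, hedge⟩, hacc, rfl⟩
    obtain ⟨n, -, hn⟩ := hacc 0
    exact key n z ⟨rfl, hedge⟩ hacc hn
  intro n
  induction n with
  | zero => exact base
  | succ n ih =>
    intro z hz hacc hn
    by_cases h2 : Ω (z 0) = 2
    · exact base z hz hacc h2
    · exact (h₁ _ h2).trans (extStepB_le_val hval (ih _ hz.shift hacc.shift hn))

lemma val_le_of_chain (hvalLeast : ∀ w, PhiB B γ r w = w → val ≤ w) {z : ℕ → Q} {c : ℕ → ℕ∞}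
    (hc : ∀ n, csub (baddB B (γ (z n) (z (n + 1))) (c (n + 1))) (r (z n)) ≤ c n) :
    val z ≤ c 0 := by
  let w : (ℕ → Q) → ℕ∞ := fun z' => ⨅ (n) (_ : z' = fun m => z (n + m)), c n
  have hw : valStep B γ r w ≤ w := by
    intro z'
    refine le_iInf₂ fun n hn => ?_
    subst hn
    have hshift : (fun m => z (n + (m + 1))) = fun m => z (n + 1 + m) := by
      funext m
      rw [Nat.add_right_comm, Nat.add_assoc]
    refine le_trans (csub_mono_left _ (baddB_mono_right B _ ?_)) (hc n)
    exact iInf₂_le (n + 1) hshift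
  calc val z ≤ lfp (valStep B γ r) z := hvalLeast _ (valStep B γ r).map_lfp z
    _ ≤ w z := lfp_le _ hw z
    _ ≤ c 0 := iInf₂_le 0 (by simp)

lemma exists_accepting_run_val_le [Finite Q] (hvalLeast : ∀ w, PhiB B γ r w = w → val ≤ w)
    {U : ℕ → Q → ℕ∞} {K : ℕ} (hU₀ : ∀ q, Ω q ≠ 2 → U 0 q = ⊤)
    (hU : ∀ k q, extStepB B γ r (U (if Ω q = 2 then K else k - 1)) q ≤ U k q)
    {q : Q} (hq : U K q ≠ ⊤) : ∃ z, IsRun γ q z ∧ Accepting Ω z ∧ val z ≤ U K q := by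
  choose next hnext using exists_extStepB_eq B γ r
  let step : Q × ℕ → Q × ℕ := fun s =>
    (next (U (if Ω s.1 = 2 then K else s.2 - 1)) s.1, if Ω s.1 = 2 then K else s.2 - 1)
  let s : ℕ → Q × ℕ := fun n => step^[n] (q, K)
  have hs : ∀ n, s (n + 1) = step (s n) := fun n => Function.iterate_succ_apply' step n _
  have hchain : ∀ n, csub (baddB B (γ (s n).1 (s (n + 1)).1) (U (s (n + 1)).2 (s (n + 1)).1))
      (r (s n).1) ≤ U (s n).2 (s n).1 := fun n => by
    rw [hs, ← hnext]
    exact hU _ _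
  have hstep : ∀ n, U (s n).2 (s n).1 ≠ ⊤ →
      γ (s n).1 (s (n + 1)).1 ≠ ⊤ ∧ U (s (n + 1)).2 (s (n + 1)).1 ≠ ⊤ := fun n h =>
    ne_top_of_baddB_ne_top (ne_top_of_csub_ne_top (ne_top_of_le_ne_top h (hchain n)))
  have hfin : ∀ n, U (s n).2 (s n).1 ≠ ⊤ := by
    intro n
    induction n with
    | zero => exact hq
    | succ n ih => exact (hstep n ih).2
  have hrank : ∀ n, Ω (s n).1 ≠ 2 → (s (n + 1)).2 < (s n).2 := by
    intro n h2
    have hpos : (s n).2 ≠ 0 := fun h0 => hfin n (h0 ▸ hU₀ _ h2)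
    rw [hs]
    simp only [step, if_neg h2]
    omega
  exact ⟨fun n => (s n).1, ⟨rfl, fun n => (hstep n (hfin n)).1⟩,
    accepting_of_rank_lt (fun n => (s n).2) hrank, val_le_of_chain hvalLeast hchain⟩

end Value

section Extent

variable {Q : Type*} (B : ℕ) (γ : Q → Q → ℕ∞) (r : Q → ℕ∞) (Ω : Q → ℕ)
  (hΩ : ∀ q, Ω q = 1 ∨ Ω q = 2)

noncomputable def innerStep (u₂ : {q // Ω q = 2} → ℕ∞) :
    ({q // Ω q = 1} → ℕ∞) →o ({q // Ω q = 1} → ℕ∞) where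
  toFun u₁ q := extStepB B γ r (copair Ω hΩ u₁ u₂) q
  monotone' _ _ h q := extStepB_mono B γ r (copair_mono Ω hΩ h le_rfl) q

lemma innerStep_mono : Monotone (innerStep B γ r Ω hΩ) :=
  fun _ _ h _ q => extStepB_mono B γ r (copair_mono Ω hΩ le_rfl h) q

noncomputable def outerStep (inner : ({q // Ω q = 2} → ℕ∞) → ({q // Ω q = 1} → ℕ∞))
    (hmono : Monotone inner) : ({q // Ω q = 2} → ℕ∞) →o ({q // Ω q = 2} → ℕ∞) where
  toFun u₂ q := extStepB B γ r (copair Ω hΩ (inner u₂) u₂) q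
  monotone' _ _ h q := extStepB_mono B γ r (copair_mono Ω hΩ (hmono h) h) q

variable {B γ r Ω hΩ} {inner : ({q // Ω q = 2} → ℕ∞) → ({q // Ω q = 1} → ℕ∞)}
  (hinner : ∀ u₂, innerStep B γ r Ω hΩ u₂ (inner u₂) = inner u₂)
  (hinnerGreatest : ∀ u₂ u₁, innerStep B γ r Ω hΩ u₂ u₁ = u₁ → u₁ ≤ inner u₂)
include hinner hinnerGreatest

lemma eq_gfp_innerStep (u₂ : {q // Ω q = 2} → ℕ∞) : inner u₂ = (innerStep B γ r Ω hΩ u₂).gfp :=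
  ((isGreatest_gfp _).unique ⟨hinner u₂, fun u₁ => hinnerGreatest u₂ u₁⟩).symm

lemma monotone_inner : Monotone inner := by
  intro u₂ u₂' h
  rw [eq_gfp_innerStep hinner hinnerGreatest, eq_gfp_innerStep hinner hinnerGreatest]
  exact gfp.mono (innerStep_mono B γ r Ω hΩ h)

lemma copair_inner_le_minAcceptingVal {val : (ℕ → Q) → ℕ∞} (hval : PhiB B γ r val = val)
    {e₂ : {q // Ω q = 2} → ℕ∞}
    (he₂Least : ∀ u₂, (fun q : {q // Ω q = 2} =>
      extStepB B γ r (copair Ω hΩ (inner u₂) u₂) q.1) = u₂ → e₂ ≤ u₂) :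
    copair Ω hΩ (inner e₂) e₂ ≤ minAcceptingVal γ Ω val := by
  have hmono : Monotone inner := monotone_inner hinner hinnerGreatest
  let W₂ : {q // Ω q = 2} → ℕ∞ := fun q => minAcceptingVal γ Ω val q
  have hW : copair Ω hΩ (inner W₂) W₂ ≤ minAcceptingVal γ Ω val := by
    refine le_minAcceptingVal hval (fun q h2 => ?_) (fun q h2 => ?_)
    · rw [copair_of_ne_two Ω hΩ h2]
      exact (congrFun (hinner W₂) _).ge
    · rw [copair_of_eq_two Ω hΩ h2]
  have he₂W : e₂ ≤ W₂ := by
    let F := outerStep B γ r Ω hΩ inner hmono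
    refine (he₂Least _ F.map_lfp).trans (F.lfp_le fun q => le_sInf ?_)
    rintro _ ⟨z, hz, hacc, rfl⟩
    show extStepB B γ r _ q.1 ≤ val z
    rw [← hz.1]
    exact extStepB_le_val hval ((hW _).trans (sInf_le ⟨_, hz.shift, hacc.shift, rfl⟩))
  exact (copair_mono Ω hΩ (hmono he₂W) he₂W).trans hW

lemma minAcceptingVal_le_copair_inner [Finite Q] {val : (ℕ → Q) → ℕ∞}
    (hvalLeast : ∀ w, PhiB B γ r w = w → val ≤ w) {e₂ : {q // Ω q = 2} → ℕ∞}
    (he₂ : (fun q : {q // Ω q = 2} =>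
      extStepB B γ r (copair Ω hΩ (inner e₂) e₂) q.1) = e₂) (q : Q) :
    minAcceptingVal γ Ω val q ≤ copair Ω hΩ (inner e₂) e₂ q := by
  obtain ⟨K, hK⟩ := (innerStep B γ r Ω hΩ e₂).exists_iterate_top_eq_gfp
  rw [← eq_gfp_innerStep hinner hinnerGreatest] at hK
  let U : ℕ → Q → ℕ∞ := fun k => copair Ω hΩ ((innerStep B γ r Ω hΩ e₂)^[k] ⊤) e₂
  have hUK : U K = copair Ω hΩ (inner e₂) e₂ := by simp only [U, hK]
  have hU₀ : ∀ q, Ω q ≠ 2 → U 0 q = ⊤ := fun q h2 => copair_of_ne_two Ω hΩ h2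
  have hU : ∀ k q, extStepB B γ r (U (if Ω q = 2 then K else k - 1)) q ≤ U k q := by
    intro k q
    by_cases h2 : Ω q = 2
    · rw [if_pos h2, hUK]
      exact (congrFun he₂ ⟨q, h2⟩).trans_le (copair_of_eq_two Ω hΩ h2).ge
    · rw [if_neg h2]
      cases k with
      | zero => exact le_top.trans_eq (hU₀ q h2).symm
      | succ k =>
        rw [show U (k + 1) q = _ from copair_of_ne_two Ω hΩ h2, Function.iterate_succ_apply']
        rfl
  rw [← hUK]
  by_cases hq : U K q = ⊤
  · exact hq ▸ le_top
  · obtain ⟨z, hz, hacc, hle⟩ := exists_accepting_run_val_le hvalLeast hU₀ hU hq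
    exact sInf_le_of_le ⟨z, hz, hacc, rfl⟩ hle

end Extent

theorem stmt12_general {Q : Type*} [Fintype Q]
    (γ : Q → Q → ℕ∞) (r : Q → ℕ∞) (Ω : Q → ℕ) (hΩ : ∀ q, Ω q = 1 ∨ Ω q = 2)
    (B : ℕ)
    -- `val` is the `≤`-least fixpoint (pointwise order) of `Φ`
    (val : (ℕ → Q) → ℕ∞)
    (hval : PhiB B γ r val = val)
    (hvalLeast : ∀ w, PhiB B γ r w = w → val ≤ w)
    -- `inner u₂` is the `≤`-greatest fixpoint of `u₁ ↦ extStep [u₁, u₂]` on `Q₁`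
    (inner : ({q // Ω q = 2} → ℕ∞) → ({q // Ω q = 1} → ℕ∞))
    (hinner : ∀ u₂, (fun q : {q // Ω q = 1} =>
      extStepB B γ r (copair Ω hΩ (inner u₂) u₂) q.1) = inner u₂)
    (hinnerGreatest : ∀ u₂ u₁, (fun q : {q // Ω q = 1} =>
      extStepB B γ r (copair Ω hΩ u₁ u₂) q.1) = u₁ → u₁ ≤ inner u₂)
    -- `e₂` is the `≤`-least fixpoint of `u₂ ↦ extStep [inner u₂, u₂]` on `Q₂`
    (e₂ : {q // Ω q = 2} → ℕ∞)
    (he₂ : (fun q : {q // Ω q = 2} =>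
      extStepB B γ r (copair Ω hΩ (inner e₂) e₂) q.1) = e₂)
    (he₂Least : ∀ u₂, (fun q : {q // Ω q = 2} =>
      extStepB B γ r (copair Ω hΩ (inner u₂) u₂) q.1) = u₂ → e₂ ≤ u₂)
    -- the extent is the copairing `[inner e₂, e₂]`
    (ext : Q → ℕ∞) (hext : ext = copair Ω hΩ (inner e₂) e₂)
    (q : Q) :
    ext q = sInf {v : ℕ∞ | ∃ z : ℕ → Q, IsRun γ q z ∧ Accepting Ω z ∧ val z = v} := by
  subst hext
  exact le_antisymm
    (copair_inner_le_minAcceptingVal hinner hinnerGreatest hval he₂Least q)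
    (minAcceptingVal_le_copair_inner hinner hinnerGreatest hvalLeast he₂ q)

/-- for every state `q` of a B-bounded resource-aware Büchi word
automaton, `ext q = sInf { val z | z an accepting run from q }` (in `(ℕ∞, ≤)`,
with `sInf ∅ = ∞`). -/
theorem stmt12 {Q : Type*} [Fintype Q]
    (γ : Q → Q → ℕ∞) (r : Q → ℕ∞) (Ω : Q → ℕ) (hΩ : ∀ q, Ω q = 1 ∨ Ω q = 2)
    -- B-boundedness: every finite value of `γ` and of `r` is at most `B`
    (B : ℕ)
    (hγB : ∀ q q', γ q q' ≠ ⊤ → γ q q' ≤ (B : ℕ∞))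
    (hrB : ∀ q, r q ≠ ⊤ → r q ≤ (B : ℕ∞))
    -- `val` is the `≤`-least fixpoint (pointwise order) of `Φ`
    (val : (ℕ → Q) → ℕ∞)
    (hval : PhiB B γ r val = val)
    (hvalLeast : ∀ w, PhiB B γ r w = w → val ≤ w)
    -- `inner u₂` is the `≤`-greatest fixpoint of `u₁ ↦ extStep [u₁, u₂]` on `Q₁`
    (inner : ({q // Ω q = 2} → ℕ∞) → ({q // Ω q = 1} → ℕ∞))
    (hinner : ∀ u₂, (fun q : {q // Ω q = 1} =>
      extStepB B γ r (copair Ω hΩ (inner u₂) u₂) q.1) = inner u₂)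
    (hinnerGreatest : ∀ u₂ u₁, (fun q : {q // Ω q = 1} =>
      extStepB B γ r (copair Ω hΩ u₁ u₂) q.1) = u₁ → u₁ ≤ inner u₂)
    -- `e₂` is the `≤`-least fixpoint of `u₂ ↦ extStep [inner u₂, u₂]` on `Q₂`
    (e₂ : {q // Ω q = 2} → ℕ∞)
    (he₂ : (fun q : {q // Ω q = 2} =>
      extStepB B γ r (copair Ω hΩ (inner e₂) e₂) q.1) = e₂)
    (he₂Least : ∀ u₂, (fun q : {q // Ω q = 2} =>
      extStepB B γ r (copair Ω hΩ (inner u₂) u₂) q.1) = u₂ → e₂ ≤ u₂)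
    -- the extent is the copairing `[inner e₂, e₂]`
    (ext : Q → ℕ∞) (hext : ext = copair Ω hΩ (inner e₂) e₂)
    (q : Q) :
    ext q = sInf {v : ℕ∞ | ∃ z : ℕ → Q, IsRun γ q z ∧ Accepting Ω z ∧ val z = v} :=
  stmt12_general γ r Ω hΩ B val hval hvalLeast inner hinner hinnerGreatest e₂ he₂ he₂Least ext hext
    q
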